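/- For every integer t ≥ 3, the set of symplectic t-cores is infinite, and the set of orthogonal t-cores is infinite. That is, there are infinitely many partitions λ that are t-cores and satisfy λ'_i − i = λ_i − i + 1 for all 1 ≤ i ≤ rank(λ), and infinitely many partitions λ that are t-cores and satisfy λ'_i − i = λ_i − i − 1 for all 1 ≤ i ≤ rank(λ). -/

import Mathlib

open BigOperators

/-- A partition: a weakly decreasing finite list of positive integers. -/
structure Partn where
  parts : List ℕ
  sorted : parts.Pairwise (· ≥ ·)
  pos : ∀ a ∈ parts, 0 < a

namespace Partn

/-- The beta set of a partition, taken with `m = ℓ(λ)` rows: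
`β_j = λ_j + ℓ(λ) - j` (0-indexed). -/
def beta (p : Partn) (j : ℕ) : ℕ :=
  p.parts.getD j 0 + (p.parts.length - 1 - j)

/-- `p` is a `t`-core: whenever a beta number is `≥ t`, the beta number `β - t` also
occurs (equivalently, no hook length equals `t`). -/
def IsTCore (t : ℕ) (p : Partn) : Prop :=
  ∀ j < p.parts.length, t ≤ p.beta j →
    ∃ k < p.parts.length, p.beta k = p.beta j - t

/-- The (Frobenius) rank: `max {k : λ_k ≥ k}` (`0` for the empty partition). -/
def rank (p : Partn) : ℕ :=
  ((Finset.range (p.parts.length + 1)).filter fun i => i + 1 ≤ p.parts.getD i 0).sup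
    fun i => i + 1

/-- `p` is `z`-asymmetric: `λ'_i - i = λ_i - i + z` for all `1 ≤ i ≤ rank(λ)`, where
`λ'_i = #{j : λ_j ≥ i}` is the conjugate partition.  Symplectic partitions are the
`1`-asymmetric ones, orthogonal partitions the `(-1)`-asymmetric ones. -/
def ZAsym (z : ℤ) (p : Partn) : Prop :=
  ∀ i : ℕ, i + 1 ≤ p.rank →
    ((p.parts.countP fun a => decide (i + 1 ≤ a) : ℕ) : ℤ) = (p.parts.getD i 0 : ℤ) + z

end Partn

/-!
Adding a new first row of length `λ₁ + t` and a new first column of length `ℓ(λ) + t` (a new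
principal hook) leaves `λ'_i - λ_i` unchanged along the diagonal, so it preserves
`z`-asymmetry. On beta numbers it shifts every `β` by `t`, adds `1, …, t - 1`, and adds a new
largest `β` lying `t` above the shifted old largest one, so it also preserves being a `t`-core.
Iterating it from the hooks `(1, 1)` (symplectic) and `(2)` (orthogonal), which are `t`-cores for
`t ≥ 3` because their largest hook length is `2`, gives partitions of ever greater length.
-/

namespace Partn

section

variable (p : Partn)

lemma getD_antitone : Antitone fun i => p.parts.getD i 0 := by
  intro i j hij
  dsimp only
  rcases Nat.lt_or_ge j p.parts.length with hj | hj
  · rw [List.getD_eq_getElem _ _ hj, List.getD_eq_getElem _ _ (hij.trans_lt hj)]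
    exact p.sorted.rel_get_of_le (a := ⟨i, hij.trans_lt hj⟩) (b := ⟨j, hj⟩) hij
  · rw [List.getD_eq_default _ _ hj]
    exact Nat.zero_le _

lemma getD_le_getD_zero (i : ℕ) : p.parts.getD i 0 ≤ p.parts.getD 0 0 :=
  p.getD_antitone (Nat.zero_le i)

lemma one_le_getD {i : ℕ} (hi : i < p.parts.length) : 1 ≤ p.parts.getD i 0 := by
  rw [List.getD_eq_getElem _ _ hi]
  exact p.pos _ (List.getElem_mem hi)

lemma one_le_beta {j : ℕ} (hj : j < p.parts.length) : 1 ≤ p.beta j :=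
  (p.one_le_getD hj).trans (Nat.le_add_right _ _)

lemma countP_one_le : p.parts.countP (fun a => decide (1 ≤ a)) = p.parts.length :=
  List.countP_eq_length.2 fun a ha => decide_eq_true (p.pos a ha)

lemma lt_rank_iff {i : ℕ} : i < p.rank ↔ i + 1 ≤ p.parts.getD i 0 := by
  unfold rank
  rw [Finset.lt_sup_iff]
  constructor
  · rintro ⟨k, hk, hik⟩
    have hk := (Finset.mem_filter.1 hk).2
    have := p.getD_antitone (Nat.le_of_lt_succ hik)
    dsimp only at this
    omega
  · intro hi
    refine ⟨i, Finset.mem_filter.2 ⟨Finset.mem_range.2 ?_, hi⟩, Nat.lt_succ_self i⟩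
    by_contra! h
    rw [List.getD_eq_default _ _ (by omega)] at hi
    omega

lemma isTCore_of_getD_zero_add_length_le {t : ℕ} (h : p.parts.getD 0 0 + p.parts.length ≤ t) :
    p.IsTCore t := by
  intro j hj hβ
  have := p.getD_le_getD_zero j
  unfold beta at hβ
  omega

end

section addHook

variable (p : Partn) {t : ℕ} (ht : 0 < t)

def addHook : Partn where
  parts := (p.parts.getD 0 0 + t) :: (p.parts.map (· + 1) ++ List.replicate (t - 1) 1)
  sorted := by
    refine List.pairwise_cons.2 ⟨fun b hb => ?_, List.pairwise_append.2
      ⟨p.sorted.map _ fun a b h => Nat.succ_le_succ h, List.pairwise_replicate.2 (Or.inr le_rfl),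
        fun a ha b hb => ?_⟩⟩
    · rcases List.mem_append.1 hb with hb | hb
      · obtain ⟨a, ha, rfl⟩ := List.mem_map.1 hb
        obtain ⟨i, hi, rfl⟩ := List.getElem_of_mem ha
        have := p.getD_le_getD_zero i
        rw [List.getD_eq_getElem _ _ hi] at this
        omega
      · rw [List.eq_of_mem_replicate hb]
        omega
    · obtain ⟨a, -, rfl⟩ := List.mem_map.1 ha
      rw [List.eq_of_mem_replicate hb]
      omega
  pos := by
    intro a ha
    rcases List.mem_cons.1 ha with rfl | ha
    · omega
    rcases List.mem_append.1 ha with ha | ha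
    · obtain ⟨b, -, rfl⟩ := List.mem_map.1 ha
      omega
    · rw [List.eq_of_mem_replicate ha]
      exact Nat.one_pos

@[simp]
lemma length_addHook : (p.addHook ht).parts.length = p.parts.length + t := by
  simp [addHook]
  omega

lemma getD_addHook_zero : (p.addHook ht).parts.getD 0 0 = p.parts.getD 0 0 + t := rfl

lemma getD_addHook_succ {i : ℕ} (hi : i < p.parts.length) :
    (p.addHook ht).parts.getD (i + 1) 0 = p.parts.getD i 0 + 1 := by
  have hi' : i < (p.parts.map (· + 1)).length := by simpa using hi
  rw [addHook, List.getD_cons_succ, List.getD_append _ _ _ _ hi', List.getD_eq_getElem _ _ hi',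
    List.getElem_map, List.getD_eq_getElem _ _ hi]

lemma getD_addHook_of_length_lt {j : ℕ} (hj : p.parts.length < j)
    (hjt : j < p.parts.length + t) : (p.addHook ht).parts.getD j 0 = 1 := by
  obtain ⟨i, rfl⟩ : ∃ i, j = i + 1 := ⟨j - 1, by omega⟩
  rw [addHook, List.getD_cons_succ, List.getD_append_right _ _ _ _ (by simp; omega),
    List.getD_eq_getElem _ _ (by simp; omega), List.getElem_replicate]

lemma getD_addHook_le_one {j : ℕ} (hj : p.parts.length < j) :
    (p.addHook ht).parts.getD j 0 ≤ 1 := by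
  rcases Nat.lt_or_ge j (p.parts.length + t) with hjt | hjt
  · exact (p.getD_addHook_of_length_lt ht hj hjt).le
  · rw [List.getD_eq_default _ _ (by simpa using hjt)]
    exact Nat.zero_le 1

lemma beta_addHook_succ {i : ℕ} (hi : i < p.parts.length) :
    (p.addHook ht).beta (i + 1) = p.beta i + t := by
  simp only [beta, getD_addHook_succ p ht hi, length_addHook]
  omega

lemma beta_addHook_zero (hp : p.parts ≠ []) :
    (p.addHook ht).beta 0 = (p.addHook ht).beta 1 + t := by
  have := List.length_pos_iff.2 hp
  rw [beta_addHook_succ p ht this]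
  simp only [beta, getD_addHook_zero, length_addHook]
  omega

lemma beta_addHook_lt {j : ℕ} (hj : p.parts.length < j) (hjt : j < p.parts.length + t) :
    (p.addHook ht).beta j < t := by
  simp only [beta, length_addHook, p.getD_addHook_of_length_lt ht hj hjt]
  omega

lemma exists_beta_addHook_eq {v : ℕ} (hv : 0 < v) (hvt : v < t) :
    ∃ k < (p.addHook ht).parts.length, (p.addHook ht).beta k = v := by
  refine ⟨p.parts.length + t - v, by simp; omega, ?_⟩
  simp only [beta, length_addHook, p.getD_addHook_of_length_lt ht (j := p.parts.length + t - v)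
    (by omega) (by omega)]
  omega

lemma countP_addHook {i : ℕ} (hi : i + 1 ≤ p.parts.getD 0 0) :
    (p.addHook ht).parts.countP (fun a => decide (i + 2 ≤ a)) =
      p.parts.countP (fun a => decide (i + 1 ≤ a)) + 1 := by
  have hones : (List.replicate (t - 1) 1).countP (fun a => decide (i + 2 ≤ a)) = 0 :=
    List.countP_eq_zero.2 fun a ha => by simp [List.eq_of_mem_replicate ha]
  rw [addHook, List.countP_cons, List.countP_append, List.countP_map, hones,
    if_pos (decide_eq_true (by omega))]
  congr 2
  exact List.countP_congr fun a _ => by simp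

end addHook

section preservation

variable {p : Partn} {t : ℕ} (ht : 0 < t)

theorem IsTCore.addHook (hc : p.IsTCore t) (hp : p.parts ≠ []) : (p.addHook ht).IsTCore t := by
  intro j hj hβ
  rw [length_addHook] at hj
  rcases j with _ | i
  · have := List.length_pos_iff.2 hp
    have := p.beta_addHook_zero ht hp
    exact ⟨1, by simp; omega, by omega⟩
  rcases Nat.lt_or_ge i p.parts.length with hi | hi
  · rw [p.beta_addHook_succ ht hi, Nat.add_sub_cancel]
    rcases Nat.lt_or_ge (p.beta i) t with hlt | hge
    · exact p.exists_beta_addHook_eq ht (p.one_le_beta hi) hlt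
    · obtain ⟨k, hk, hβk⟩ := hc i hi hge
      refine ⟨k + 1, by simp; omega, ?_⟩
      rw [p.beta_addHook_succ ht hk]
      omega
  · exact absurd hβ (not_le.2 (p.beta_addHook_lt ht (by omega) hj))

theorem ZAsym.addHook {z : ℤ} (hz : p.ZAsym z) (hp : p.parts ≠ []) : (p.addHook ht).ZAsym z := by
  intro i hi
  rcases i with _ | i
  · have h0 := hz 0 ((p.lt_rank_iff).2 (p.one_le_getD (List.length_pos_iff.2 hp)))
    rw [zero_add, countP_one_le] at h0 ⊢
    rw [length_addHook, getD_addHook_zero]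
    push_cast
    omega
  · have hq := ((p.addHook ht).lt_rank_iff).1 hi
    have hlen : i < p.parts.length := by
      by_contra! h
      have := p.getD_addHook_le_one ht (j := i + 1) (by omega)
      omega
    rw [p.getD_addHook_succ ht hlen] at hq ⊢
    have hhead := p.getD_le_getD_zero i
    rw [p.countP_addHook ht (by omega)]
    push_cast
    rw [hz i ((p.lt_rank_iff).2 (by omega))]
    ring

end preservation

lemma zAsym_of_getD_one_le_one {p : Partn} {z : ℤ} (h1 : p.parts.getD 1 0 ≤ 1)
    (hz : (p.parts.length : ℤ) = p.parts.getD 0 0 + z) : p.ZAsym z := by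
  intro i hi
  have hi := (p.lt_rank_iff).1 hi
  obtain rfl : i = 0 := by
    by_contra! h
    have := p.getD_antitone (Nat.one_le_iff_ne_zero.2 h)
    dsimp only at this
    omega
  rw [zero_add, countP_one_le, hz]

lemma length_addHook_iterate {t : ℕ} (ht : 0 < t) (p : Partn) (n : ℕ) :
    ((addHook · ht)^[n] p).parts.length = p.parts.length + n * t := by
  induction n with
  | zero => simp
  | succ n ih =>
    rw [Function.iterate_succ_apply', length_addHook, ih]
    ring

theorem infinite_setOf_isTCore_zAsym {t : ℕ} (ht : 0 < t) {z : ℤ} {p : Partn}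
    (hp : p.parts ≠ []) (hc : p.IsTCore t) (hz : p.ZAsym z) :
    {q : Partn | q.IsTCore t ∧ q.ZAsym z}.Infinite := by
  refine Set.infinite_of_injective_forall_mem (f := fun n => (addHook · ht)^[n] p) ?_ ?_
  · intro m n hmn
    have := congrArg (·.parts.length) hmn
    simp only [length_addHook_iterate] at this
    exact Nat.eq_of_mul_eq_mul_right ht (by omega)
  · intro n
    exact (Function.Iterate.rec (fun q : Partn => q.parts ≠ [] ∧ q.IsTCore t ∧ q.ZAsym z)
      ⟨hp, hc, hz⟩ (fun q ⟨hq, hqc, hqz⟩ => ⟨List.cons_ne_nil _ _, hqc.addHook ht hq,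
        hqz.addHook ht hq⟩) n).2

end Partn

/-- For every `t ≥ 3` there are infinitely many symplectic `t`-cores and infinitely
many orthogonal `t`-cores. -/
theorem infinitely_many_symplectic_and_orthogonal_tcores
    (t : ℕ) (ht : 3 ≤ t) :
    {p : Partn | p.IsTCore t ∧ p.ZAsym 1}.Infinite ∧
    {p : Partn | p.IsTCore t ∧ p.ZAsym (-1)}.Infinite := by
  have ht0 : 0 < t := by omega
  let column : Partn := ⟨[1, 1], by decide, by simp⟩
  let row : Partn := ⟨[2], by decide, by simp⟩
  constructor
  · exact Partn.infinite_setOf_isTCore_zAsym ht0 (p := column) (by simp [column])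
      (column.isTCore_of_getD_zero_add_length_le ht)
      (Partn.zAsym_of_getD_one_le_one le_rfl (by norm_num [column]))
  · exact Partn.infinite_setOf_isTCore_zAsym ht0 (p := row) (by simp [row])
      (row.isTCore_of_getD_zero_add_length_le ht)
      (Partn.zAsym_of_getD_one_le_one zero_le_one (by norm_num [row]))
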